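/- The 2-chain t_1 = (1, 3) in C_2^Q(R_4) is a cycle (∂ t_1 = 0) and is not a boundary in the quandle chain complex with Z_2 coefficients; equivalently, its homology class in H_2^Q(R_4; Z_2) is nonzero, as witnessed by the Z_2-valued cocycle χ_{(1,0)} + χ_{(3,0)} + χ_{(1,3)} + χ_{(3,1)} evaluating to 1 on it. -/

import Mathlib

/-! A cocycle pairs to zero with boundaries and degenerate chains, so it pairs with
homology; `phi` is such a cocycle and takes the value `1` on `t1`, so `t1` cannot be
a boundary modulo degenerate chains. -/

/-- The dihedral quandle operation on `R_4 = ZMod 4`: `i * j = 2j - i`. -/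
def dop (i j : ZMod 4) : ZMod 4 := 2 * j - i

/-- Quandle boundary of a basis triple, with `ℤ_2` coefficients. -/
noncomputable def d3single (x y z : ZMod 4) : (ZMod 4 × ZMod 4) →₀ ZMod 2 :=
  Finsupp.single (x, z) 1 - Finsupp.single (dop x y, z) 1
    - Finsupp.single (x, y) 1 + Finsupp.single (dop x z, dop y z) 1

/-- Linear extension of the boundary to 3-chains with `ℤ_2` coefficients. -/
noncomputable def d3 (w : (ZMod 4 × ZMod 4 × ZMod 4) →₀ ZMod 2) :
    (ZMod 4 × ZMod 4) →₀ ZMod 2 :=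
  w.sum fun p n => n • d3single p.1 p.2.1 p.2.2

/-- The degenerate 2-chains with `ℤ_2` coefficients. -/
noncomputable def deg2 : Submodule (ZMod 2) ((ZMod 4 × ZMod 4) →₀ ZMod 2) :=
  Submodule.span (ZMod 2) {f | ∃ x : ZMod 4, f = Finsupp.single (x, x) 1}

/-- The cocycle `χ_{(1,0)} + χ_{(3,0)} + χ_{(1,3)} + χ_{(3,1)}`. -/
def phi (x y : ZMod 4) : ZMod 2 :=
  (if (x, y) = (1, 0) then 1 else 0) + (if (x, y) = (3, 0) then 1 else 0)
    + (if (x, y) = (1, 3) then 1 else 0) + (if (x, y) = (3, 1) then 1 else 0)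

/-- Evaluation of a `ℤ_2`-valued function on a 2-chain. -/
noncomputable def eval (c : (ZMod 4 × ZMod 4) →₀ ZMod 2) : ZMod 2 :=
  c.sum fun p n => n * phi p.1 p.2

/-- `t_1 = (1,3)`. -/
noncomputable def t1 : (ZMod 4 × ZMod 4) →₀ ZMod 2 := Finsupp.single (1, 3) 1

noncomputable def cochainPairing {X R : Type*} [CommSemiring R] (ψ : X → X → R) :
    ((X × X) →₀ R) →ₗ[R] R :=
  Finsupp.linearCombination R fun p => ψ p.1 p.2

/-- `ψ(x,y) + ψ(x*y,z) = ψ(x,z) + ψ(x*z,y*z)`, written as the vanishing of `ψ` on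
`d3single x y z`, together with `ψ(x,x) = 0`. -/
def IsCocycle (ψ : ZMod 4 → ZMod 4 → ZMod 2) : Prop :=
  (∀ x y z, ψ x z - ψ (dop x y) z - ψ x y + ψ (dop x z) (dop y z) = 0) ∧ ∀ x, ψ x x = 0

theorem cochainPairing_single {X R : Type*} [CommSemiring R] (ψ : X → X → R)
    (p : X × X) (n : R) : cochainPairing ψ (Finsupp.single p n) = n * ψ p.1 p.2 := by
  simp [cochainPairing, smul_eq_mul]

theorem eval_eq_cochainPairing (c : (ZMod 4 × ZMod 4) →₀ ZMod 2) :
    eval c = cochainPairing phi c := by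
  simp [cochainPairing, eval, Finsupp.linearCombination_apply, smul_eq_mul]

theorem IsCocycle.cochainPairing_d3 {ψ : ZMod 4 → ZMod 4 → ZMod 2} (hψ : IsCocycle ψ)
    (w : (ZMod 4 × ZMod 4 × ZMod 4) →₀ ZMod 2) : cochainPairing ψ (d3 w) = 0 := by
  have hsingle (x y z : ZMod 4) : cochainPairing ψ (d3single x y z) = 0 := by
    simpa only [d3single, map_add, map_sub, cochainPairing_single, one_mul] using hψ.1 x y z
  simp [d3, map_finsuppSum, hsingle]

theorem IsCocycle.cochainPairing_eq_zero_of_mem_deg2 {ψ : ZMod 4 → ZMod 4 → ZMod 2}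
    (hψ : IsCocycle ψ) {c : (ZMod 4 × ZMod 4) →₀ ZMod 2} (hc : c ∈ deg2) :
    cochainPairing ψ c = 0 := by
  refine (Submodule.span_le (p := LinearMap.ker (cochainPairing ψ))).2 ?_ hc
  rintro _ ⟨x, rfl⟩
  simp [cochainPairing_single, hψ.2 x]

theorem isCocycle_phi : IsCocycle phi := by
  unfold IsCocycle
  decide

/-- `t_1 = (1,3)` is a cycle (`∂(x,y) = (x) - (x*y)` vanishes on it), it is not a
boundary in the quandle chain complex with `ℤ_2` coefficients, and the cocycle
`χ_{(1,0)} + χ_{(3,0)} + χ_{(1,3)} + χ_{(3,1)}` evaluates to `1` on it; hence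
its class in `H_2^Q(R_4; ℤ_2)` is nonzero. -/
theorem t1_nontrivial_mod_two :
    (Finsupp.single (1 : ZMod 4) (1 : ZMod 2)
        - Finsupp.single (dop 1 3) (1 : ZMod 2) = 0) ∧
    (∀ w : (ZMod 4 × ZMod 4 × ZMod 4) →₀ ZMod 2, t1 - d3 w ∉ deg2) ∧
    eval t1 = 1 := by
  have hdop : dop 1 3 = 1 := by decide
  have heval : eval t1 = 1 := by
    rw [eval_eq_cochainPairing, t1, cochainPairing_single]
    decide
  refine ⟨by rw [hdop, sub_self], fun w hw => ?_, heval⟩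
  have hzero := isCocycle_phi.cochainPairing_eq_zero_of_mem_deg2 hw
  rw [map_sub, isCocycle_phi.cochainPairing_d3, sub_zero, ← eval_eq_cochainPairing,
    heval] at hzero
  exact one_ne_zero hzero
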